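/- arXiv:1312.7159 — 2 statements merged into one kernel-verified Lean document; each statement's English description precedes it below -/
import Mathlib

section
/- If a, b, c are the vertices of a triangle listed in positive (counterclockwise) order, i.e., Im((b - a)·conj(c - a)) < 0 — equivalently the signed area Im(conj(b-a)·(c-a)) > 0 — then |a + τb + τ²c| < |ā + τ b̄ + τ² c̄|; consequently |μ(a,b,c)| < 1. -/
/-!
Writing `τ = -1/2 + i√3/2` and expanding, the difference of the squared moduli of
`ā + τ b̄ + τ² c̄` and `a + τ b + τ² c` is exactly `2√3` times the signed area form
`Im (conj (b - a) * (c - a))`, so positive orientation makes the second modulus the smaller one.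
-/

open Complex ComplexConjugate

noncomputable def tau : ℂ := Complex.exp (2 * (Real.pi : ℂ) * Complex.I / 3)

noncomputable def mu (a b c : ℂ) : ℂ :=
  -(a + tau * b + tau ^ 2 * c) / (conj a + tau * conj b + tau ^ 2 * conj c)

lemma tau_eq_mk : tau = ⟨-(1 / 2), √3 / 2⟩ := by
  have hangle : 2 * (Real.pi : ℝ) / 3 = Real.pi - Real.pi / 3 := by ring
  have harg : 2 * (Real.pi : ℂ) * I / 3 = ((2 * Real.pi / 3 : ℝ) : ℂ) * I := by
    push_cast
    ring
  rw [tau, harg, exp_mul_I, ← ofReal_cos, ← ofReal_sin, hangle, Real.cos_pi_sub,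
    Real.sin_pi_sub, Real.cos_pi_div_three, Real.sin_pi_div_three]
  apply Complex.ext <;> simp

lemma normSq_conj_tau_comb_sub_normSq_tau_comb (a b c : ℂ) :
    normSq (conj a + tau * conj b + tau ^ 2 * conj c) - normSq (a + tau * b + tau ^ 2 * c)
      = 2 * √3 * (conj (b - a) * (c - a)).im := by
  have hsqrt : √3 ^ 2 = 3 := Real.sq_sqrt (by norm_num)
  rw [tau_eq_mk]
  simp only [pow_two, normSq_apply, add_re, add_im, mul_re, mul_im, sub_re, sub_im,
    conj_re, conj_im]
  linear_combination (√3 / 2) * (b.re * c.im - b.im * c.re) * hsqrt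

lemma norm_tau_comb_lt_norm_conj_tau_comb (a b c : ℂ)
    (hpos : 0 < (conj (b - a) * (c - a)).im) :
    ‖a + tau * b + tau ^ 2 * c‖ < ‖conj a + tau * conj b + tau ^ 2 * conj c‖ := by
  have hsq : normSq (a + tau * b + tau ^ 2 * c)
      < normSq (conj a + tau * conj b + tau ^ 2 * conj c) := by
    have harea : 0 < 2 * √3 * (conj (b - a) * (c - a)).im := by positivity
    linarith [normSq_conj_tau_comb_sub_normSq_tau_comb a b c]
  rw [norm_def, norm_def]
  exact Real.sqrt_lt_sqrt (normSq_nonneg _) hsq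

theorem mu_lt_one_of_pos_oriented (a b c : ℂ)
    (hpos : 0 < (conj (b - a) * (c - a)).im) :
    ‖a + tau * b + tau ^ 2 * c‖
      < ‖conj a + tau * conj b + tau ^ 2 * conj c‖ ∧
    ‖mu a b c‖ < 1 := by
  have hlt := norm_tau_comb_lt_norm_conj_tau_comb a b c hpos
  refine ⟨hlt, ?_⟩
  rw [mu, norm_div, norm_neg, div_lt_one ((norm_nonneg _).trans_lt hlt)]
  exact hlt
end

section
/- If h : Ω → ℂ is continuous on an open set Ω ⊂ ℂ and Φ₀ : ℂ → ℂ is an invertible ℝ-linear map such that ∮_γ h(z) dΦ₀(z) = 0 for every triangular closed contour γ contained in Ω, then h ∘ Φ₀⁻¹ is holomorphic on Φ₀(Ω). -/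
open Complex ComplexConjugate

/-- The contour integral of `g` along the straight segment from `z` to `w`. -/
noncomputable def segInt (g : ℂ → ℂ) (z w : ℂ) : ℂ :=
  ∫ t in (0:ℝ)..1, (w - z) * g ((1 - (t : ℂ)) * z + (t : ℂ) * w)

/-- The contour integral of `g` along the boundary of the triangle `(z₁, z₂, z₃)`. -/
noncomputable def triInt (g : ℂ → ℂ) (z₁ z₂ z₃ : ℂ) : ℂ :=
  segInt g z₁ z₂ + segInt g z₂ z₃ + segInt g z₃ z₁

lemma segInt_symm (g : ℂ → ℂ) (z w : ℂ) : segInt g w z = - segInt g z w := by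
  have h := intervalIntegral.integral_comp_sub_left
    (fun t : ℝ => (z - w) * g ((1 - (t : ℂ)) * w + (t : ℂ) * z)) 1 (a := 0) (b := 1)
  simp only [sub_zero, sub_self] at h
  unfold segInt
  rw [← h, ← intervalIntegral.integral_neg]
  apply intervalIntegral.integral_congr
  intro t _
  push_cast
  ring_nf

lemma segment_mem_ball {w₀ : ℂ} {r : ℝ} {w w' : ℂ} (hw : w ∈ Metric.ball w₀ r)
    (hw' : w' ∈ Metric.ball w₀ r) {t : ℝ} (ht : t ∈ Set.Icc (0:ℝ) 1) :
    (1 - (t : ℂ)) * w + (t : ℂ) * w' ∈ Metric.ball w₀ r := by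
  have := (convex_ball w₀ r) hw hw' (a := 1 - t) (b := t) (by linarith [ht.2]) ht.1 (by ring)
  simp only [Complex.real_smul] at this
  convert this using 3 <;> push_cast <;> ring

/-- Morera's theorem. -/
lemma morera (U : Set ℂ) (hU : IsOpen U) (g : ℂ → ℂ) (hg : ContinuousOn g U)
    (hz : ∀ w₁ w₂ w₃ : ℂ, convexHull ℝ ({w₁, w₂, w₃} : Set ℂ) ⊆ U →
      triInt g w₁ w₂ w₃ = 0) :
    DifferentiableOn ℂ g U := by
  intro w₀ hw₀
  obtain ⟨r, rpos, hball⟩ := Metric.isOpen_iff.mp hU w₀ hw₀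
  set F : ℂ → ℂ := fun w => segInt g w₀ w with hF
  have hInt : ∀ w ∈ Metric.ball w₀ r, ∀ w' ∈ Metric.ball w₀ r, ∀ c : ℂ,
      IntervalIntegrable (fun t : ℝ => (w' - w) * (g ((1 - (t : ℂ)) * w + (t : ℂ) * w') - c))
        MeasureTheory.volume 0 1 := by
    intro w hw w' hw' c
    apply ContinuousOn.intervalIntegrable
    rw [Set.uIcc_of_le zero_le_one]
    refine ContinuousOn.mul continuousOn_const (ContinuousOn.sub ?_ continuousOn_const)
    refine hg.comp (Continuous.continuousOn ?_) (fun t ht => hball (segment_mem_ball hw hw' ht))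
    exact ((continuous_const.sub Complex.continuous_ofReal).mul continuous_const).add
      (Complex.continuous_ofReal.mul continuous_const)
  have key : ∀ w ∈ Metric.ball w₀ r, HasDerivAt F (g w) w := by
    intro w hw
    have hFdiff : ∀ w' ∈ Metric.ball w₀ r, F w' - F w = segInt g w w' := by
      intro w' hw'
      have htri : triInt g w₀ w w' = 0 := by
        apply hz
        refine (convexHull_min ?_ (convex_ball w₀ r)).trans hball
        intro x hx
        simp only [Set.mem_insert_iff, Set.mem_singleton_iff] at hx
        rcases hx with rfl | rfl | rfl
        · exact Metric.mem_ball_self rpos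
        · exact hw
        · exact hw'
      have hsym := segInt_symm g w₀ w'
      unfold triInt at htri
      show segInt g w₀ w' - segInt g w₀ w = segInt g w w'
      linear_combination hsym - htri
    rw [hasDerivAt_iff_isLittleO, Asymptotics.isLittleO_iff]
    intro c hc
    have hgw : ContinuousAt g w := hg.continuousAt (hU.mem_nhds (hball hw))
    rw [Metric.continuousAt_iff] at hgw
    obtain ⟨δ, δpos, hδ⟩ := hgw c hc
    have hρ : 0 < r - dist w w₀ := by
      rw [Metric.mem_ball] at hw; linarith
    filter_upwards [Metric.ball_mem_nhds w (lt_min δpos hρ)] with w' hw'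
    rw [Metric.mem_ball] at hw'
    have hw'ball : w' ∈ Metric.ball w₀ r := by
      rw [Metric.mem_ball]
      have h1 := dist_triangle w' w w₀
      have h2 : dist w' w < r - dist w w₀ := lt_of_lt_of_le hw' (min_le_right _ _)
      linarith
    have h1 : IntervalIntegrable (fun t : ℝ => (w' - w) * g ((1 - (t : ℂ)) * w + (t : ℂ) * w'))
        MeasureTheory.volume 0 1 := by
      simpa using hInt w hw w' hw'ball 0
    have hEq : F w' - F w - (w' - w) • g w
        = ∫ t in (0:ℝ)..1, (w' - w) * (g ((1 - (t : ℂ)) * w + (t : ℂ) * w') - g w) := by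
      rw [hFdiff w' hw'ball]
      simp only [mul_sub]
      rw [intervalIntegral.integral_sub h1 intervalIntegrable_const,
        intervalIntegral.integral_const]
      simp only [segInt, sub_zero, one_smul, smul_eq_mul]
    rw [hEq]
    have hb := intervalIntegral.norm_integral_le_of_norm_le_const
      (C := c * ‖w' - w‖) (a := (0:ℝ)) (b := 1)
      (f := fun t : ℝ => (w' - w) * (g ((1 - (t : ℂ)) * w + (t : ℂ) * w') - g w)) ?_
    · simpa using hb
    · intro t ht
      rw [Set.uIoc_of_le zero_le_one] at ht
      have ht' : t ∈ Set.Icc (0:ℝ) 1 := ⟨le_of_lt ht.1, ht.2⟩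
      rw [norm_mul]
      have hdist : dist ((1 - (t : ℂ)) * w + (t : ℂ) * w') w < δ := by
        have hrw : (1 - (t : ℂ)) * w + (t : ℂ) * w' - w = (t : ℂ) * (w' - w) := by ring
        rw [dist_eq_norm, hrw, norm_mul]
        calc ‖(t : ℂ)‖ * ‖w' - w‖ ≤ 1 * ‖w' - w‖ := by
              gcongr
              simpa [Complex.norm_real, Real.norm_eq_abs, _root_.abs_of_nonneg ht'.1]
                using ht'.2
          _ = ‖w' - w‖ := one_mul _
          _ = dist w' w := (dist_eq_norm w' w).symm
          _ < δ := lt_of_lt_of_le hw' (min_le_left _ _)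
      have hgd := hδ hdist
      rw [dist_eq_norm] at hgd
      calc ‖w' - w‖ * ‖g ((1 - (t : ℂ)) * w + (t : ℂ) * w') - g w‖
          ≤ ‖w' - w‖ * c := mul_le_mul_of_nonneg_left (le_of_lt hgd) (norm_nonneg _)
        _ = c * ‖w' - w‖ := mul_comm _ _
  have hFd : DifferentiableOn ℂ F (Metric.ball w₀ r) := fun w hw =>
    ((key w hw).differentiableAt).differentiableWithinAt
  have hAn := (hFd.analyticOnNhd Metric.isOpen_ball).deriv
  have hda : DifferentiableAt ℂ (deriv F) w₀ :=
    (hAn w₀ (Metric.mem_ball_self rpos)).differentiableAt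
  have heq : g =ᶠ[nhds w₀] deriv F := by
    filter_upwards [Metric.ball_mem_nhds w₀ rpos] with w hw
    exact ((key w hw).deriv).symm
  exact (hda.congr_of_eventuallyEq heq).differentiableWithinAt

theorem holomorphic_after_linear_chart (Ω : Set ℂ) (hΩ : IsOpen Ω)
    (h : ℂ → ℂ) (hc : ContinuousOn h Ω)
    (α β : ℂ) (hαβ : ‖β‖ ≠ ‖α‖)
    (Φ₀ : ℂ → ℂ) (hΦ₀ : ∀ z, Φ₀ z = α * z + β * conj z)
    (Ψ : ℂ → ℂ) (hΨ : ∀ z, Ψ (Φ₀ z) = z) (hΨ' : ∀ w, Φ₀ (Ψ w) = w)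
    (hint : ∀ z₁ z₂ z₃ : ℂ, convexHull ℝ ({z₁, z₂, z₃} : Set ℂ) ⊆ Ω →
      triInt (h ∘ Ψ) (Φ₀ z₁) (Φ₀ z₂) (Φ₀ z₃) = 0) :
    DifferentiableOn ℂ (h ∘ Ψ) (Φ₀ '' Ω) := by
  set d : ℂ := α * conj α - β * conj β with hdd
  have hd : d ≠ 0 := by
    rw [hdd, Complex.mul_conj, Complex.mul_conj]
    intro hEq
    apply hαβ
    have : (Complex.normSq α : ℂ) = (Complex.normSq β : ℂ) := by
      rw [sub_eq_zero] at hEq; exact hEq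
    have h2 : Complex.normSq α = Complex.normSq β := by exact_mod_cast this
    rw [Complex.norm_def, Complex.norm_def, h2]
  have hcd : conj d = d := by
    rw [hdd]
    simp only [map_sub, map_mul, conj_conj]
    ring
  have hΨf : ∀ w, Ψ w = (conj α * w - β * conj w) / d := by
    intro w
    have h1 : Φ₀ ((conj α * w - β * conj w) / d) = w := by
      rw [hΦ₀, map_div₀, hcd, map_sub, map_mul, map_mul, conj_conj]
      field_simp
      rw [conj_conj, hdd]
      ring
    conv_lhs => rw [← h1, hΨ]
  have hΨc : Continuous Ψ := by
    have : Ψ = fun w => (conj α * w - β * conj w) / d := funext hΨf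
    rw [this]
    exact ((continuous_const.mul continuous_id).sub
      (continuous_const.mul Complex.continuous_conj)).div_const d
  have hΨlin : IsLinearMap ℝ Ψ := by
    constructor
    · intro x y
      simp only [hΨf, map_add]
      ring
    · intro c x
      simp only [hΨf, Complex.real_smul, map_mul, Complex.conj_ofReal]
      ring
  have hUeq : Φ₀ '' Ω = Ψ ⁻¹' Ω := by
    ext w
    constructor
    · rintro ⟨z, hz, rfl⟩
      rw [Set.mem_preimage, hΨ]
      exact hz
    · intro hw
      exact ⟨Ψ w, hw, hΨ' w⟩
  have hU : IsOpen (Φ₀ '' Ω) := by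
    rw [hUeq]; exact hΩ.preimage hΨc
  have hmaps : ∀ w ∈ Φ₀ '' Ω, Ψ w ∈ Ω := by
    rintro _ ⟨z, hz, rfl⟩
    rw [hΨ]; exact hz
  have hgc : ContinuousOn (h ∘ Ψ) (Φ₀ '' Ω) :=
    hc.comp hΨc.continuousOn hmaps
  apply morera _ hU _ hgc
  intro w₁ w₂ w₃ hsub
  have hkey : convexHull ℝ ({Ψ w₁, Ψ w₂, Ψ w₃} : Set ℂ) ⊆ Ω := by
    have hconv : Convex ℝ (Ψ '' convexHull ℝ ({w₁, w₂, w₃} : Set ℂ)) :=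
      (convex_convexHull ℝ _).is_linear_image hΨlin
    have h1 : convexHull ℝ ({Ψ w₁, Ψ w₂, Ψ w₃} : Set ℂ)
        ⊆ Ψ '' convexHull ℝ ({w₁, w₂, w₃} : Set ℂ) := by
      apply convexHull_min _ hconv
      intro x hx
      simp only [Set.mem_insert_iff, Set.mem_singleton_iff] at hx
      rcases hx with rfl | rfl | rfl
      · exact ⟨w₁, subset_convexHull ℝ _ (by simp), rfl⟩
      · exact ⟨w₂, subset_convexHull ℝ _ (by simp), rfl⟩
      · exact ⟨w₃, subset_convexHull ℝ _ (by simp), rfl⟩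
    refine h1.trans ?_
    rintro _ ⟨x, hx, rfl⟩
    exact hmaps x (hsub hx)
  have := hint (Ψ w₁) (Ψ w₂) (Ψ w₃) hkey
  rwa [hΨ', hΨ', hΨ'] at this
end
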